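/- arXiv:2404.04549 — 2 statements merged into one kernel-verified Lean document; each statement's English description precedes it below -/
import Mathlib

section
/- Let Ψ = (A_in, Φ, A_out) be an affine SNN with encoder A_in(x)=W_in x + b_in : ℝ^{d_0} → ℝ^{d_in} and decoder A_out(z)=W_out z + b_out : ℝ^{d_out} → ℝ^{d_1}. Then for all x, x̃ ∈ ℝ^{d_0}: ‖R(Ψ)(x) − R(Ψ)(x̃)‖_{ℓ∞} ≤ (d_0 · d_out)^{1/2} · ‖W_in‖_F · ‖W_out‖_F · ‖x − x̃‖_{ℓ∞}, where ‖·‖_F denotes the Frobenius norm. -/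
open scoped BigOperators

noncomputable section

/-- The ReLU function. -/
def relu (t : ℝ) : ℝ := max t 0

/-- A network graph: a finite directed acyclic graph without isolated nodes. -/
structure NetworkGraph (V : Type) [Fintype V] [DecidableEq V] where
  E : Finset (V × V)
  acyclic : WellFounded (fun u v : V => (u, v) ∈ E)
  noIsolated : ∀ v : V, (∃ u, (u, v) ∈ E) ∨ (∃ u, (v, u) ∈ E)

variable {V : Type} [Fintype V] [DecidableEq V]

/-- Input nodes: nodes with no incoming edges. -/
def NetworkGraph.Vin (G : NetworkGraph V) : Set V := {v | ∀ u, (u, v) ∉ G.E}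

/-- Output nodes: nodes with no outgoing edges. -/
def NetworkGraph.Vout (G : NetworkGraph V) : Set V := {v | ∀ u, (v, u) ∉ G.E}

/-- There exists a directed path with `n` edges in `G`. -/
def NetworkGraph.HasPathLen (G : NetworkGraph V) (n : ℕ) : Prop :=
  ∃ p : Fin (n + 1) → V, ∀ i : Fin n, (p i.castSucc, p i.succ) ∈ G.E

/-- The graph depth (length of the longest directed path) of `G` equals `L`. -/
def NetworkGraph.DepthEq (G : NetworkGraph V) (L : ℕ) : Prop :=
  G.HasPathLen L ∧ ∀ n : ℕ, G.HasPathLen n → n ≤ L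

/-- The potential of node `v` at time `s`, given presynaptic spike times `t`,
weights `w` and delays `d`. -/
def potential (G : NetworkGraph V) (w d : V × V → ℝ) (t : V → ℝ) (v : V) (s : ℝ) : ℝ :=
  ∑ u ∈ Finset.univ.filter (fun u => (u, v) ∈ G.E), w (u, v) * relu (s - t u - d (u, v))

/-- `t` is a consistent assignment of spike times extending the input spike times `tin`:
on input nodes it agrees with `tin`, and at every non-input node `v` the spike time `t v`
is the minimum (which exists) of the set of times at which the potential reaches `1`. -/
def IsSpikeMap (G : NetworkGraph V) (w d : V × V → ℝ) (tin : V → ℝ) (t : V → ℝ) : Prop :=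
  (∀ v ∈ G.Vin, t v = tin v) ∧
  ∀ v : V, v ∉ G.Vin → IsLeast {s : ℝ | potential G w d t v s = 1} (t v)

open Classical in
/-- The spike-time assignment determined by the input spike times `tin` (via choice). -/
def spikeMap (G : NetworkGraph V) (w d : V × V → ℝ) (tin : V → ℝ) : V → ℝ :=
  if h : ∃ t, IsSpikeMap G w d tin t then h.choose else fun _ => 0

/-- Realization of a (positive) SNN, given enumerations of input and output nodes. -/
def snnReal (G : NetworkGraph V) (w d : V × V → ℝ) {din dout : ℕ}
    (ein : Fin din → V) (eout : Fin dout → V) (x : Fin din → ℝ) : Fin dout → ℝ :=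
  fun j => spikeMap G w d (Function.extend ein x (fun _ => 0)) (eout j)

/-- Frobenius norm of a real matrix. -/
def frobNorm {m n : ℕ} (A : Matrix (Fin m) (Fin n) ℝ) : ℝ :=
  Real.sqrt (∑ i, ∑ j, (A i j) ^ 2)

/-- Realization of an affine SNN: affine encoder, positive SNN, affine decoder. -/
def affineReal (G : NetworkGraph V) (w d : V × V → ℝ) {din dout d0 d1 : ℕ}
    (ein : Fin din → V) (eout : Fin dout → V)
    (Win : Matrix (Fin din) (Fin d0) ℝ) (bin : Fin din → ℝ)
    (Wout : Matrix (Fin d1) (Fin dout) ℝ) (bout : Fin d1 → ℝ)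
    (x : Fin d0 → ℝ) : Fin d1 → ℝ :=
  Wout.mulVec (snnReal G w d ein eout (Win.mulVec x + bin)) + bout

/-- ℓ∞ distance of the parameters (weights and delays) of two SNNs on the same graph. -/
def paramDist (G : NetworkGraph V) (w d w' d' : V × V → ℝ) : ℝ :=
  sSup ((fun e => max |w e - w' e| |d e - d' e|) '' (G.E : Set (V × V)))

/-- An affine spiking neural network with input dimension `d0` and output dimension `d1`:
a positive SNN together with enumerations of its input/output nodes and an affine
encoder/decoder pair. -/
structure AffSNN (d0 d1 : ℕ) where
  n : ℕ
  din : ℕ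
  dout : ℕ
  G : NetworkGraph (Fin n)
  w : Fin n × Fin n → ℝ
  dl : Fin n × Fin n → ℝ
  ein : Fin din → Fin n
  eout : Fin dout → Fin n
  Win : Matrix (Fin din) (Fin d0) ℝ
  bin : Fin din → ℝ
  Wout : Matrix (Fin d1) (Fin dout) ℝ
  bout : Fin d1 → ℝ
  w_pos : ∀ e ∈ G.E, 0 < w e
  dl_nonneg : ∀ e ∈ G.E, 0 ≤ dl e
  ein_inj : Function.Injective ein
  ein_range : Set.range ein = G.Vin
  eout_inj : Function.Injective eout
  eout_range : Set.range eout = G.Vout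

/-- Realization of an affine SNN. -/
def AffSNN.real {d0 d1 : ℕ} (Ψ : AffSNN d0 d1) : (Fin d0 → ℝ) → Fin d1 → ℝ :=
  affineReal Ψ.G Ψ.w Ψ.dl Ψ.ein Ψ.eout Ψ.Win Ψ.bin Ψ.Wout Ψ.bout

/-- Size of an affine SNN: the number of nonzero scalar entries of
`(W, D, W_in, W_out, b_in, b_out)`. -/
def AffSNN.size {d0 d1 : ℕ} (Ψ : AffSNN d0 d1) : ℕ :=
  {e | e ∈ Ψ.G.E ∧ Ψ.w e ≠ 0}.ncard + {e | e ∈ Ψ.G.E ∧ Ψ.dl e ≠ 0}.ncard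
    + {p : Fin Ψ.din × Fin d0 | Ψ.Win p.1 p.2 ≠ 0}.ncard
    + {p : Fin d1 × Fin Ψ.dout | Ψ.Wout p.1 p.2 ≠ 0}.ncard
    + {i : Fin Ψ.din | Ψ.bin i ≠ 0}.ncard + {i : Fin d1 | Ψ.bout i ≠ 0}.ncard

/-- All scalar weights of the affine SNN are bounded above in absolute value by `C`. -/
def AffSNN.weightsBddAbove {d0 d1 : ℕ} (Ψ : AffSNN d0 d1) (C : ℝ) : Prop :=
  (∀ e ∈ Ψ.G.E, |Ψ.w e| ≤ C) ∧ (∀ e ∈ Ψ.G.E, |Ψ.dl e| ≤ C) ∧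
  (∀ i j, |Ψ.Win i j| ≤ C) ∧ (∀ i, |Ψ.bin i| ≤ C) ∧
  (∀ i j, |Ψ.Wout i j| ≤ C) ∧ (∀ i, |Ψ.bout i| ≤ C)

/-- All synaptic weights of the affine SNN are bounded below by `c`. -/
def AffSNN.synBddBelow {d0 d1 : ℕ} (Ψ : AffSNN d0 d1) (c : ℝ) : Prop :=
  ∀ e ∈ Ψ.G.E, c ≤ Ψ.w e

/-- Clipping to the interval `[0,1]`. -/
def clip01 (y : ℝ) : ℝ := max 0 (min 1 y)

/-- The hypothesis class of `[0,1]`-clipped realizations of affine SNNs on a fixed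
network graph with parameters bounded as in `P*_SNN(G, d⃗; b, B)` (with `d1 = 1`). -/
def clippedClass (G : NetworkGraph V) {din dout : ℕ} (ein : Fin din → V) (eout : Fin dout → V)
    (b B : ℝ) (d0 : ℕ) : Set ((Fin d0 → ℝ) → ℝ) :=
  { f | ∃ (Win : Matrix (Fin din) (Fin d0) ℝ) (bin : Fin din → ℝ)
        (w dl : V × V → ℝ) (Wout : Matrix (Fin 1) (Fin dout) ℝ) (bout : Fin 1 → ℝ),
      (∀ i j, Win i j ∈ Set.Icc (-B) B) ∧ (∀ i, bin i ∈ Set.Icc (-B) B) ∧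
      (∀ e ∈ G.E, w e ∈ Set.Icc b B) ∧ (∀ e ∈ G.E, dl e ∈ Set.Icc 0 B) ∧
      (∀ i j, Wout i j ∈ Set.Icc (-B) B) ∧ (∀ i, bout i ∈ Set.Icc (-B) B) ∧
      f = fun x => clip01 (affineReal G w dl ein eout Win bin Wout bout x 0) }

/-- The Lipschitz constant `L*` from the covering-number estimate. -/
def Lstar (d0 din dout L : ℕ) (b B : ℝ) : ℝ :=
  (dout : ℝ) * (2 * Real.sqrt din * d0 * B + B * L * (1 + 1 / b ^ 2)
    + 2 * B + L * (1 / b + B)) + 1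

/-- A regular triangulation of a compact set `Ω ⊆ ℝ^{d0}`, with simplices recorded by
their vertex sets. -/
structure RegTriangulation (d0 : ℕ) (Ω : Set (Fin d0 → ℝ)) where
  nodes : Finset (Fin d0 → ℝ)
  faces : Finset (Finset (Fin d0 → ℝ))
  nodes_sub : (nodes : Set (Fin d0 → ℝ)) ⊆ Ω
  card_face : ∀ S ∈ faces, S.card = d0 + 1
  indep : ∀ S ∈ faces, AffineIndependent ℝ ((↑) : {x // x ∈ S} → (Fin d0 → ℝ))
  face_nodes : ∀ S ∈ faces,
    (nodes : Set (Fin d0 → ℝ)) ∩ convexHull ℝ (S : Set (Fin d0 → ℝ)) = (S : Set (Fin d0 → ℝ))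
  cover : Ω = ⋃ S ∈ faces, convexHull ℝ (S : Set (Fin d0 → ℝ))
  inter : ∀ S ∈ faces, ∀ S' ∈ faces,
    convexHull ℝ (S : Set (Fin d0 → ℝ)) ∩ convexHull ℝ (S' : Set (Fin d0 → ℝ))
      = convexHull ℝ ((S ∩ S' : Finset (Fin d0 → ℝ)) : Set (Fin d0 → ℝ))

/-- Euclidean distance on `ℝ^{d0}` (realized as `Fin d0 → ℝ`). -/
def eudist {d0 : ℕ} (x y : Fin d0 → ℝ) : ℝ := Real.sqrt (∑ i, (x i - y i) ^ 2)

/-- Minimal mesh size: the minimal distance between two distinct nodes of a simplex. -/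
def hmin {d0 : ℕ} {Ω : Set (Fin d0 → ℝ)} (T : RegTriangulation d0 Ω) : ℝ :=
  sInf { r | ∃ S ∈ T.faces, ∃ x ∈ S, ∃ y ∈ S, x ≠ y ∧ r = eudist x y }

/-- Maximal mesh size: the maximal distance between two nodes of a simplex. -/
def hmax {d0 : ℕ} {Ω : Set (Fin d0 → ℝ)} (T : RegTriangulation d0 Ω) : ℝ :=
  sSup { r | ∃ S ∈ T.faces, ∃ x ∈ S, ∃ y ∈ S, r = eudist x y }

/-- `f` belongs to the linear finite element space `V_T`: it is continuous on `Ω` and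
affine on each simplex of `T`. -/
def PiecewiseAffineOn {d0 : ℕ} {Ω : Set (Fin d0 → ℝ)} (T : RegTriangulation d0 Ω)
    (f : (Fin d0 → ℝ) → ℝ) : Prop :=
  ContinuousOn f Ω ∧ ∀ S ∈ T.faces, ∃ (a : Fin d0 → ℝ) (c : ℝ),
    ∀ x ∈ convexHull ℝ (S : Set (Fin d0 → ℝ)), f x = ∑ i, a i * x i + c

/-- Admissibility of a compact domain: existence of quasi-uniform triangulations. -/
def Admissible (d0 : ℕ) (Ω : Set (Fin d0 → ℝ)) : Prop :=
  ∃ C1 C2 c2 : ℝ, 0 < C1 ∧ 0 < C2 ∧ 0 < c2 ∧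
    ∀ N : ℕ, 0 < N → ∃ T : RegTriangulation d0 Ω,
      (T.faces.card : ℝ) ≤ C1 * N ∧
      c2 * (N : ℝ) ^ (-(1 : ℝ) / d0) ≤ hmin T ∧
      hmin T ≤ hmax T ∧
      hmax T ≤ C2 * (N : ℝ) ^ (-(1 : ℝ) / d0)

/-- The `W^{s,∞}(Ω)` norm (for `C^s` functions): supremum over `Ω` of the norms of the
iterated derivatives of order at most `s`. -/
def sobNorm {d0 : ℕ} (s : ℕ) (Ω : Set (Fin d0 → ℝ)) (f : (Fin d0 → ℝ) → ℝ) : ℝ :=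
  sSup { r | ∃ k ≤ s, ∃ x ∈ Ω, r = ‖iteratedFDeriv ℝ k f x‖ }

/-- The `L^∞(Ω)` norm. -/
def supNormOn {d0 : ℕ} (Ω : Set (Fin d0 → ℝ)) (f : (Fin d0 → ℝ) → ℝ) : ℝ :=
  sSup ((fun x => |f x|) '' Ω)

/-- The Barron class `Γ_K`. -/
def BarronClass (d0 : ℕ) (K : ℝ) (f : (Fin d0 → ℝ) → ℝ) : Prop :=
  MeasureTheory.LocallyIntegrable f MeasureTheory.volume ∧
  ∃ g : (Fin d0 → ℝ) → ℂ, Measurable g ∧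
    (∀ x, (f x : ℂ) = ∫ ξ, Complex.exp (Complex.I * ((∑ i, x i * ξ i : ℝ) : ℂ)) * g ξ) ∧
    (∫ ξ, eudist ξ 0 * ‖g ξ‖) ≤ K

end

/-!
A positive SNN is `1`-Lipschitz for the sup norm on spike times. Spike times are monotone in
the input spike times, because the potential `∑ w relu (s - t_u - d)` decreases when a
presynaptic time `t_u` grows, and they are shift equivariant: adding `c` to every input time
adds `c` to every spike time. Hence inputs within `δ` of each other yield spike times within
`δ`. The affine encoder and decoder scale the sup-norm distance by at most their maximal
absolute row sum, which Cauchy–Schwarz bounds by `√n · ‖W‖_F`.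
-/

open Finset Matrix

lemma continuous_relu : Continuous relu := continuous_id.max continuous_const

lemma relu_nonneg (t : ℝ) : 0 ≤ relu t := le_max_right _ _

section ReluSum

variable {ι : Type*} (s : Finset ι) (w : ι → ℝ)

/-- The potential of a node with presynaptic weights `w i` and effective arrival times `a i`. -/
def reluSum (a : ι → ℝ) (x : ℝ) : ℝ := ∑ i ∈ s, w i * relu (x - a i)

variable {s w}

lemma continuous_reluSum (a : ι → ℝ) : Continuous (reluSum s w a) :=
  continuous_finsetSum _ fun _ _ =>
    continuous_const.mul (continuous_relu.comp (continuous_id.sub continuous_const))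

lemma reluSum_eq_zero {a : ι → ℝ} {x : ℝ} (h : ∀ i ∈ s, x ≤ a i) : reluSum s w a x = 0 :=
  sum_eq_zero fun i hi => by rw [relu, max_eq_right (sub_nonpos.2 (h i hi)), mul_zero]

lemma exists_lt_of_reluSum_ne_zero {a : ι → ℝ} {x : ℝ} (h : reluSum s w a x ≠ 0) :
    ∃ i ∈ s, a i < x := by
  by_contra! hle
  exact h (reluSum_eq_zero hle)

lemma reluSum_anti {a a' : ι → ℝ} (hw : ∀ i ∈ s, 0 ≤ w i) (ha : ∀ i ∈ s, a i ≤ a' i) (x : ℝ) :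
    reluSum s w a' x ≤ reluSum s w a x :=
  sum_le_sum fun i hi =>
    mul_le_mul_of_nonneg_left (max_le_max (by linarith [ha i hi]) le_rfl) (hw i hi)

lemma one_le_reluSum {a : ι → ℝ} (hw : ∀ i ∈ s, 0 < w i) {i : ι} (hi : i ∈ s) :
    1 ≤ reluSum s w a (a i + 1 / w i) := by
  have hwi := hw i hi
  calc (1 : ℝ) = w i * relu (a i + 1 / w i - a i) := by
          rw [relu, add_sub_cancel_left, max_eq_left (by positivity)]; field_simp
    _ ≤ reluSum s w a (a i + 1 / w i) :=
        single_le_sum (f := fun j => w j * relu (a i + 1 / w i - a j))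
          (fun j hj => mul_nonneg (hw j hj).le (relu_nonneg _)) hi

lemma exists_isLeast_reluSum_eq_one (hs : s.Nonempty) (a : ι → ℝ) (hw : ∀ i ∈ s, 0 < w i) :
    ∃ t, IsLeast {x | reluSum s w a x = 1} t := by
  obtain ⟨i, hi⟩ := hs
  set m := s.inf' ⟨i, hi⟩ a
  have hm : m ≤ a i + 1 / w i := (inf'_le a hi).trans (by linarith [one_div_pos.2 (hw i hi)])
  obtain ⟨x, -, hx⟩ := intermediate_value_Icc hm (continuous_reluSum a).continuousOn
    ⟨by rw [reluSum_eq_zero fun j hj => inf'_le a hj]; exact zero_le_one, one_le_reluSum hw hi⟩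
  have hbdd : BddBelow {x | reluSum s w a x = 1} := ⟨m, fun y hy => by
    obtain ⟨j, hj, hlt⟩ := exists_lt_of_reluSum_ne_zero (s := s) (hy.trans_ne one_ne_zero)
    exact ((inf'_le a hj).trans hlt.le)⟩
  exact ⟨_, (isClosed_singleton.preimage (continuous_reluSum a)).isLeast_csInf ⟨x, hx⟩ hbdd⟩

lemma IsLeast.le_of_reluSum_eq_one {a a' : ι → ℝ} {t t' : ℝ}
    (h : IsLeast {x | reluSum s w a x = 1} t) (h' : reluSum s w a' t' = 1)
    (hw : ∀ i ∈ s, 0 ≤ w i) (ha : ∀ i ∈ s, a i ≤ a' i) : t ≤ t' := by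
  obtain ⟨i, hi, hlt⟩ := exists_lt_of_reluSum_ne_zero (h'.trans_ne one_ne_zero)
  set m := s.inf' ⟨i, hi⟩ a
  have hm : m ≤ t' := ((inf'_le a hi).trans (ha i hi)).trans hlt.le
  obtain ⟨x, hx, hx1⟩ := intermediate_value_Icc hm (continuous_reluSum a).continuousOn
    ⟨by rw [reluSum_eq_zero fun j hj => inf'_le a hj]; exact zero_le_one,
      h'.symm.le.trans (reluSum_anti hw ha t')⟩
  exact (h.2 hx1).trans hx.2

end ReluSum

variable {V : Type} [Fintype V] [DecidableEq V]

lemma potential_eq_reluSum (G : NetworkGraph V) (w d : V × V → ℝ) (t : V → ℝ) (v : V) :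
    potential G w d t v = reluSum (univ.filter fun u => (u, v) ∈ G.E) (fun u => w (u, v))
      (fun u => t u + d (u, v)) := by
  ext s
  simp only [potential, reluSum, sub_sub]

lemma potential_congr (G : NetworkGraph V) (w d : V × V → ℝ) {t t' : V → ℝ} {v : V}
    (h : ∀ u, (u, v) ∈ G.E → t u = t' u) : potential G w d t v = potential G w d t' v := by
  ext s
  exact sum_congr rfl fun u hu => by rw [h u (mem_filter.1 hu).2]

lemma NetworkGraph.filter_pred_nonempty {G : NetworkGraph V} {v : V} (hv : v ∉ G.Vin) :
    (univ.filter fun u => (u, v) ∈ G.E).Nonempty := by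
  simp only [NetworkGraph.Vin, Set.mem_ofPred_eq, not_forall, not_not] at hv
  obtain ⟨u, hu⟩ := hv
  exact ⟨u, mem_filter.2 ⟨mem_univ u, hu⟩⟩

section SpikeMap

variable (G : NetworkGraph V) (w d : V × V → ℝ)

lemma IsSpikeMap.mono (hw : ∀ e ∈ G.E, 0 < w e) {tin tin' t t' : V → ℝ}
    (h : IsSpikeMap G w d tin t) (h' : IsSpikeMap G w d tin' t')
    (hle : ∀ v ∈ G.Vin, tin v ≤ tin' v) : t ≤ t' := by
  intro v
  induction v using G.acyclic.induction with
  | _ v ih =>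
    by_cases hv : v ∈ G.Vin
    · rw [h.1 v hv, h'.1 v hv]
      exact hle v hv
    · have H := h.2 v hv
      have H' := (h'.2 v hv).1
      rw [Set.mem_ofPred_eq, potential_eq_reluSum] at H'
      rw [potential_eq_reluSum] at H
      exact H.le_of_reluSum_eq_one H' (fun u hu => (hw _ (mem_filter.1 hu).2).le)
        fun u hu => add_le_add_left (ih u (mem_filter.1 hu).2) _

lemma IsSpikeMap.add_const {tin t : V → ℝ} (h : IsSpikeMap G w d tin t) (c : ℝ) :
    IsSpikeMap G w d (fun v => tin v + c) (fun v => t v + c) := by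
  have hshift : ∀ v s, potential G w d (fun u => t u + c) v s = potential G w d t v (s - c) :=
    fun v s => sum_congr rfl fun u _ => by congr 2; ring
  refine ⟨fun v hv => by simp only [h.1 v hv], fun v hv => ⟨?_, fun s hs => ?_⟩⟩
  · simpa [Set.mem_ofPred_eq, hshift] using (h.2 v hv).1
  · rw [Set.mem_ofPred_eq, hshift] at hs
    linarith [(h.2 v hv).2 hs]

open Classical in
/-- `spikeMap` is junk unless a spike map exists; this builds one by well-founded recursion
along the acyclic edge relation. -/
noncomputable def spikeRec (tin : V → ℝ) : V → ℝ :=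
  G.acyclic.fix fun v rec =>
    if v ∈ G.Vin then tin v
    else sInf {s | potential G w d (fun u => if h : (u, v) ∈ G.E then rec u h else 0) v s = 1}

open Classical in
lemma spikeRec_eq (tin : V → ℝ) (v : V) :
    spikeRec G w d tin v = if v ∈ G.Vin then tin v
      else sInf {s | potential G w d (spikeRec G w d tin) v s = 1} := by
  rw [← potential_congr G w d (t := fun u => if (u, v) ∈ G.E then spikeRec G w d tin u else 0)
    fun u hu => if_pos hu]
  exact WellFounded.fix_eq _ _ _

lemma isSpikeMap_spikeRec (hw : ∀ e ∈ G.E, 0 < w e) (tin : V → ℝ) :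
    IsSpikeMap G w d tin (spikeRec G w d tin) := by
  refine ⟨fun v hv => by rw [spikeRec_eq, if_pos hv], fun v hv => ?_⟩
  rw [spikeRec_eq, if_neg hv, potential_eq_reluSum]
  obtain ⟨t, ht⟩ := exists_isLeast_reluSum_eq_one (NetworkGraph.filter_pred_nonempty hv) _
    fun u hu => hw _ (mem_filter.1 hu).2
  rwa [ht.csInf_eq]

lemma isSpikeMap_spikeMap (hw : ∀ e ∈ G.E, 0 < w e) (tin : V → ℝ) :
    IsSpikeMap G w d tin (spikeMap G w d tin) := by
  have hex : ∃ t, IsSpikeMap G w d tin t := ⟨_, isSpikeMap_spikeRec G w d hw tin⟩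
  rw [spikeMap, dif_pos hex]
  exact hex.choose_spec

lemma abs_spikeMap_sub_le (hw : ∀ e ∈ G.E, 0 < w e) {tin tin' : V → ℝ} {δ : ℝ}
    (h : ∀ v ∈ G.Vin, |tin v - tin' v| ≤ δ) (v : V) :
    |spikeMap G w d tin v - spikeMap G w d tin' v| ≤ δ := by
  have ht := isSpikeMap_spikeMap G w d hw tin
  have ht' := isSpikeMap_spikeMap G w d hw tin'
  rw [abs_sub_le_iff]
  constructor
  · have := ht.mono G w d hw (ht'.add_const G w d δ)
      fun u hu => by linarith [(abs_sub_le_iff.1 (h u hu)).1]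
    linarith [this v]
  · have := ht'.mono G w d hw (ht.add_const G w d δ)
      fun u hu => by linarith [(abs_sub_le_iff.1 (h u hu)).2]
    linarith [this v]

end SpikeMap

lemma dist_extend_le_dist {ι β E : Type*} [Fintype ι] [PseudoMetricSpace E] (f : ι → β)
    (g g' : ι → E) (e : β → E) (b : β) :
    dist (Function.extend f g e b) (Function.extend f g' e b) ≤ dist g g' := by
  classical
  by_cases hb : ∃ a, f a = b
  · simp only [Function.extend_def, hb, dif_pos]
    exact dist_le_pi_dist g g' _
  · simp only [Function.extend_def, hb, dif_neg, not_false_eq_true, dist_self]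
    exact dist_nonneg

lemma lipschitzWith_snnReal (G : NetworkGraph V) (w d : V × V → ℝ) (hw : ∀ e ∈ G.E, 0 < w e)
    {din dout : ℕ} (ein : Fin din → V) (eout : Fin dout → V) :
    LipschitzWith 1 (snnReal G w d ein eout) := by
  refine LipschitzWith.of_dist_le_mul fun y y' => ?_
  rw [NNReal.coe_one, one_mul, dist_pi_le_iff dist_nonneg]
  intro j
  rw [Real.dist_eq]
  exact abs_spikeMap_sub_le G w d hw (fun v _ => by
    rw [← Real.dist_eq]; exact dist_extend_le_dist ein y y' _ v) (eout j)

lemma sum_abs_le_sqrt_mul_frobNorm {m n : ℕ} (A : Matrix (Fin m) (Fin n) ℝ) (i : Fin m) :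
    ∑ j, |A i j| ≤ Real.sqrt n * frobNorm A := by
  have hrow : ∑ j, A i j ^ 2 ≤ ∑ i', ∑ j, A i' j ^ 2 :=
    single_le_sum (f := fun i' => ∑ j, A i' j ^ 2)
      (fun _ _ => sum_nonneg fun _ _ => sq_nonneg _) (mem_univ i)
  calc ∑ j, |A i j| = Real.sqrt ((∑ j, |A i j|) ^ 2) :=
        (Real.sqrt_sq (sum_nonneg fun _ _ => abs_nonneg _)).symm
    _ ≤ Real.sqrt (n * ∑ j, A i j ^ 2) := by
        gcongr
        simpa using sq_sum_le_card_mul_sum_sq (s := univ) (f := fun j => |A i j|)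
    _ ≤ Real.sqrt n * frobNorm A := by
        rw [Real.sqrt_mul (Nat.cast_nonneg n)]
        exact mul_le_mul_of_nonneg_left (Real.sqrt_le_sqrt hrow) (Real.sqrt_nonneg _)

lemma frobNorm_nonneg {m n : ℕ} (A : Matrix (Fin m) (Fin n) ℝ) : 0 ≤ frobNorm A :=
  Real.sqrt_nonneg _

lemma norm_mulVec_le_sqrt_mul_frobNorm {m n : ℕ} (A : Matrix (Fin m) (Fin n) ℝ)
    (v : Fin n → ℝ) : ‖A *ᵥ v‖ ≤ Real.sqrt n * frobNorm A * ‖v‖ := by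
  refine (pi_norm_le_iff_of_nonneg (by have := frobNorm_nonneg A; positivity)).2 fun i => ?_
  calc ‖(A *ᵥ v) i‖ = ‖∑ j, A i j * v j‖ := rfl
    _ ≤ ∑ j, ‖A i j * v j‖ := norm_sum_le _ _
    _ ≤ ∑ j, |A i j| * ‖v‖ := sum_le_sum fun j _ => by
        rw [norm_mul, Real.norm_eq_abs]
        exact mul_le_mul_of_nonneg_left (norm_le_pi_norm v j) (abs_nonneg _)
    _ = (∑ j, |A i j|) * ‖v‖ := (sum_mul _ _ _).symm
    _ ≤ Real.sqrt n * frobNorm A * ‖v‖ :=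
        mul_le_mul_of_nonneg_right (sum_abs_le_sqrt_mul_frobNorm A i) (norm_nonneg v)

/-- Theorem: Lipschitz continuity of an affine SNN in its input.
For every affine SNN `Ψ` and all inputs `x, x̃`,
`‖R(Ψ)(x) − R(Ψ)(x̃)‖_∞ ≤ (d0·dout)^{1/2}·‖W_in‖_F·‖W_out‖_F·‖x − x̃‖_∞`. -/
theorem statement1 {d0 d1 : ℕ} (Ψ : AffSNN d0 d1) (x x' : Fin d0 → ℝ) :
    ‖Ψ.real x - Ψ.real x'‖ ≤
      Real.sqrt ((d0 : ℝ) * (Ψ.dout : ℝ)) * frobNorm Ψ.Win * frobNorm Ψ.Wout * ‖x - x'‖ := by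
  set y := Ψ.Win *ᵥ x + Ψ.bin
  set y' := Ψ.Win *ᵥ x' + Ψ.bin
  set z := snnReal Ψ.G Ψ.w Ψ.dl Ψ.ein Ψ.eout y
  set z' := snnReal Ψ.G Ψ.w Ψ.dl Ψ.ein Ψ.eout y'
  have hin : ‖y - y'‖ ≤ Real.sqrt d0 * frobNorm Ψ.Win * ‖x - x'‖ := by
    simpa only [y, y', add_sub_add_right_eq_sub, ← Matrix.mulVec_sub]
      using norm_mulVec_le_sqrt_mul_frobNorm Ψ.Win (x - x')
  have hsnn : ‖z - z'‖ ≤ ‖y - y'‖ := by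
    simpa only [dist_eq_norm, NNReal.coe_one, one_mul]
      using (lipschitzWith_snnReal Ψ.G Ψ.w Ψ.dl Ψ.w_pos Ψ.ein Ψ.eout).dist_le_mul y y'
  have hout : ‖Ψ.real x - Ψ.real x'‖ ≤ Real.sqrt Ψ.dout * frobNorm Ψ.Wout * ‖z - z'‖ := by
    simpa only [AffSNN.real, affineReal, add_sub_add_right_eq_sub, ← Matrix.mulVec_sub]
      using norm_mulVec_le_sqrt_mul_frobNorm Ψ.Wout (z - z')
  calc ‖Ψ.real x - Ψ.real x'‖
      ≤ Real.sqrt Ψ.dout * frobNorm Ψ.Wout * (Real.sqrt d0 * frobNorm Ψ.Win * ‖x - x'‖) :=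
        hout.trans (mul_le_mul_of_nonneg_left (hsnn.trans hin)
          (mul_nonneg (Real.sqrt_nonneg _) (frobNorm_nonneg _)))
    _ = _ := by rw [Real.sqrt_mul (Nat.cast_nonneg d0)]; ring
end

section
/- Let d_0 ∈ ℕ with d_0 ≥ 2, and let ε > 0. Then there exists an affine SNN Ψ^min_ε = (A_in, Φ^min_ε, A_out) with realization R(Ψ^min_ε): ℝ^{d_0} → ℝ such that for all x_1, …, x_{d_0} ∈ ℝ: |R(Ψ^min_ε)(x_1,…,x_{d_0}) − min{x_1,…,x_{d_0}}| ≤ ε. Moreover, Size(Ψ^min_ε) = 2·d_0 + 1, the network graph has depth 1, all weights in Ψ^min_ε are bounded above in absolute value by max{1, 1/ε}, and all synaptic weights of Φ^min_ε are bounded below by 1/ε. -/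
open scoped BigOperators

/-! A single output neuron fed by all inputs with weight `1/ε` and no delay fires at the
first time `t` with `∑ i, ρ(t - x i) = ε`. The potential vanishes up to `min x` and reaches
`1` by `min x + ε` already through the minimizing input alone, so `min x < t ≤ min x + ε`. -/

section SpikeMap

variable {V : Type} [Fintype V] [DecidableEq V]

theorem IsSpikeMap.unique {G : NetworkGraph V} {w d : V × V → ℝ} {tin t t' : V → ℝ}
    (ht : IsSpikeMap G w d tin t) (ht' : IsSpikeMap G w d tin t') : t = t' := by
  funext v
  induction v using G.acyclic.induction with
  | _ v ih =>
    by_cases hv : v ∈ G.Vin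
    · rw [ht.1 v hv, ht'.1 v hv]
    · have hpot : potential G w d t v = potential G w d t' v := by
        funext s
        refine Finset.sum_congr rfl fun u hu => ?_
        rw [ih u (Finset.mem_filter.1 hu).2]
      exact (ht.2 v hv).unique (hpot ▸ ht'.2 v hv)

theorem spikeMap_eq_of_isSpikeMap {G : NetworkGraph V} {w d : V × V → ℝ} {tin t : V → ℝ}
    (ht : IsSpikeMap G w d tin t) : spikeMap G w d tin = t := by
  have hex : ∃ t, IsSpikeMap G w d tin t := ⟨t, ht⟩
  rw [spikeMap, dif_pos hex]
  exact hex.choose_spec.unique ht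

end SpikeMap

theorem exists_isLeast_eq_of_continuous {f : ℝ → ℝ} (hf : Continuous f) {a b c : ℝ}
    (hab : a ≤ b) (hlt : ∀ s ≤ a, f s < c) (hle : c ≤ f b) :
    ∃ t, IsLeast {s | f s = c} t ∧ a < t ∧ t ≤ b := by
  obtain ⟨s₀, hs₀, hfs₀⟩ :=
    intermediate_value_Icc hab hf.continuousOn ⟨(hlt a le_rfl).le, hle⟩
  have hbdd : BddBelow {s | f s = c} :=
    ⟨a, fun s hs => le_of_not_ge fun hsa => (hlt s hsa).ne hs⟩
  have hleast := (isClosed_eq hf continuous_const).isLeast_csInf ⟨s₀, hfs₀⟩ hbdd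
  refine ⟨_, hleast, lt_of_not_ge fun hta => (hlt _ hta).ne hleast.1, ?_⟩
  exact (hleast.2 hfs₀).trans hs₀.2

theorem exists_isLeast_sum_relu_eq_one {ι : Type*} [Fintype ι] (x : ι → ℝ) {i₀ : ι}
    (hi₀ : ∀ i, x i₀ ≤ x i) {ε : ℝ} (hε : 0 < ε) :
    ∃ t, IsLeast {s | ∑ i, 1 / ε * relu (s - x i) = 1} t ∧ x i₀ < t ∧ t ≤ x i₀ + ε := by
  refine exists_isLeast_eq_of_continuous (by unfold relu; fun_prop)
    (le_add_of_nonneg_right hε.le) (fun s hs => ?_) ?_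
  · rw [Finset.sum_eq_zero fun i _ => by rw [relu, max_eq_right (by linarith [hi₀ i]), mul_zero]]
    exact zero_lt_one
  · have hterm : 1 / ε * relu (x i₀ + ε - x i₀) = 1 := by
      rw [add_sub_cancel_left, relu, max_eq_left hε.le, one_div_mul_cancel hε.ne']
    calc (1 : ℝ) = 1 / ε * relu (x i₀ + ε - x i₀) := hterm.symm
      _ ≤ ∑ i, 1 / ε * relu (x i₀ + ε - x i) :=
        Finset.single_le_sum (f := fun i => 1 / ε * relu (x i₀ + ε - x i))
          (fun i _ => mul_nonneg (by positivity) (le_max_right _ _)) (Finset.mem_univ i₀)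

section StarGraph

variable (d : ℕ)

def starEdges : Finset (Fin (d + 1) × Fin (d + 1)) :=
  Finset.univ.image fun i : Fin d => (i.castSucc, Fin.last d)

variable {d}

theorem mem_starEdges {e : Fin (d + 1) × Fin (d + 1)} :
    e ∈ starEdges d ↔ e.1 ≠ Fin.last d ∧ e.2 = Fin.last d := by
  obtain ⟨u, v⟩ := e
  simp only [starEdges, Finset.mem_image, Finset.mem_univ, true_and, Prod.mk.injEq,
    ← Fin.exists_castSucc_eq]
  constructor
  · rintro ⟨i, rfl, rfl⟩
    exact ⟨⟨i, rfl⟩, rfl⟩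
  · rintro ⟨⟨i, rfl⟩, rfl⟩
    exact ⟨i, rfl, rfl⟩

theorem card_starEdges : (starEdges d).card = d := by
  rw [starEdges, Finset.card_image_of_injective _ fun i j hij =>
    Fin.castSucc_injective d (congrArg Prod.fst hij), Finset.card_univ, Fintype.card_fin]

variable (d) in
def starGraph [NeZero d] : NetworkGraph (Fin (d + 1)) where
  E := starEdges d
  acyclic := ⟨fun v => ⟨v, fun u hu => ⟨u, fun u' hu' =>
    absurd (mem_starEdges.1 hu').2 (mem_starEdges.1 hu).1⟩⟩⟩
  noIsolated v := by
    by_cases hv : v = Fin.last d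
    · exact Or.inl ⟨(0 : Fin d).castSucc, mem_starEdges.2 ⟨(Fin.castSucc_lt_last _).ne, hv⟩⟩
    · exact Or.inr ⟨Fin.last d, mem_starEdges.2 ⟨hv, rfl⟩⟩

variable [NeZero d]

theorem starGraph_Vin : (starGraph d).Vin = {v | v ≠ Fin.last d} := by
  ext v
  refine ⟨fun hv hvl => hv (0 : Fin d).castSucc ?_, fun hv u hu => hv (mem_starEdges.1 hu).2⟩
  exact mem_starEdges.2 ⟨(Fin.castSucc_lt_last _).ne, hvl⟩

theorem starGraph_Vout : (starGraph d).Vout = {Fin.last d} := by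
  ext v
  refine ⟨fun hv => by_contra fun hvl => hv (Fin.last d) (mem_starEdges.2 ⟨hvl, rfl⟩),
    fun hv u hu => (mem_starEdges.1 hu).1 hv⟩

theorem starGraph_depthEq_one : (starGraph d).DepthEq 1 := by
  refine ⟨⟨![(0 : Fin d).castSucc, Fin.last d], fun i => ?_⟩, fun n ⟨p, hp⟩ => ?_⟩
  · fin_cases i
    exact mem_starEdges.2 ⟨(Fin.castSucc_lt_last _).ne, rfl⟩
  · by_contra! hn
    have hmid : (⟨0, by omega⟩ : Fin n).succ = (⟨1, hn⟩ : Fin n).castSucc := rfl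
    exact (mem_starEdges.1 (hp ⟨1, hn⟩)).1 (hmid ▸ (mem_starEdges.1 (hp ⟨0, by omega⟩)).2)

theorem potential_starGraph_last (w : ℝ) (t : Fin (d + 1) → ℝ) (s : ℝ) :
    potential (starGraph d) (fun _ => w) (fun _ => 0) t (Fin.last d) s
      = ∑ i : Fin d, w * relu (s - t i.castSucc) := by
  have hpred : Finset.univ.filter (fun u => (u, Fin.last d) ∈ (starGraph d).E)
      = Finset.univ.image Fin.castSucc := by
    ext u
    simp [starGraph, mem_starEdges]
  rw [potential, hpred, Finset.sum_image fun i _ j _ hij => Fin.castSucc_injective d hij]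
  simp only [sub_zero]

end StarGraph

section MinSNN

variable {d : ℕ} [NeZero d]

variable (d) in
noncomputable def minSNN {ε : ℝ} (hε : 0 < ε) : AffSNN d 1 where
  n := d + 1
  din := d
  dout := 1
  G := starGraph d
  w _ := 1 / ε
  dl _ := 0
  ein := Fin.castSucc
  eout _ := Fin.last d
  Win := 1
  bin := 0
  Wout _ _ := 1
  bout := 0
  w_pos _ _ := by positivity
  dl_nonneg _ _ := le_rfl
  ein_inj := Fin.castSucc_injective d
  ein_range := by
    rw [starGraph_Vin]
    ext v
    exact Fin.exists_castSucc_eq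
  eout_inj _ _ _ := Subsingleton.elim _ _
  eout_range := by
    rw [starGraph_Vout]
    ext v
    exact ⟨fun ⟨_, hv⟩ => hv.symm, fun hv => ⟨0, hv.symm⟩⟩

theorem minSNN_real_eq {ε : ℝ} (hε : 0 < ε) (x : Fin d → ℝ) {t : ℝ}
    (ht : IsLeast {s | ∑ i, 1 / ε * relu (s - x i) = 1} t) :
    (minSNN d hε).real x 0 = t := by
  have hspike : IsSpikeMap (starGraph d) (fun _ => 1 / ε) (fun _ => 0)
      (Function.extend Fin.castSucc x fun _ => 0) (Fin.snoc x t : Fin (d + 1) → ℝ) := by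
    refine ⟨fun v hv => ?_, fun v hv => ?_⟩
    · obtain ⟨i, rfl⟩ := Fin.exists_castSucc_eq.2 (by simpa [starGraph_Vin] using hv)
      rw [Fin.snoc_castSucc, (Fin.castSucc_injective d).extend_apply]
    · obtain rfl : v = Fin.last d := by simpa [starGraph_Vin] using hv
      simpa only [potential_starGraph_last, Fin.snoc_castSucc, Fin.snoc_last] using ht
  have hreal : (minSNN d hε).real x 0 = spikeMap (starGraph d) (fun _ => 1 / ε) (fun _ => 0)
      (Function.extend Fin.castSucc x fun _ => 0) (Fin.last d) := by
    change Matrix.mulVec (Matrix.of fun _ _ => 1) (snnReal (starGraph d) (fun _ => 1 / ε)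
      (fun _ => 0) Fin.castSucc (fun _ : Fin 1 => Fin.last d)
      (Matrix.mulVec (1 : Matrix (Fin d) (Fin d) ℝ) x + 0)) 0 + 0 = _
    simp [Matrix.mulVec, dotProduct, snnReal]
  rw [hreal, spikeMap_eq_of_isSpikeMap hspike, Fin.snoc_last]

theorem minSNN_size {ε : ℝ} (hε : 0 < ε) : (minSNN d hε).size = 2 * d + 1 := by
  have hdiag : {p : Fin d × Fin d | (1 : Matrix (Fin d) (Fin d) ℝ) p.1 p.2 ≠ 0}
      = Set.range fun i => (i, i) := by
    ext ⟨i, j⟩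
    simp [Matrix.one_apply, eq_comm]
  change {e | e ∈ starEdges d ∧ 1 / ε ≠ 0}.ncard
      + {e : Fin (d + 1) × Fin (d + 1) | e ∈ starEdges d ∧ (0 : ℝ) ≠ 0}.ncard
      + {p : Fin d × Fin d | (1 : Matrix (Fin d) (Fin d) ℝ) p.1 p.2 ≠ 0}.ncard
      + {_p : Fin 1 × Fin 1 | (1 : ℝ) ≠ 0}.ncard
      + {i : Fin d | (0 : Fin d → ℝ) i ≠ 0}.ncard + {i : Fin 1 | (0 : Fin 1 → ℝ) i ≠ 0}.ncard
      = 2 * d + 1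
  rw [hdiag, Set.ncard_range_of_injective fun i j hij => congrArg Prod.fst hij]
  simp [hε.ne', card_starEdges]
  omega

theorem minSNN_weightsBddAbove {ε : ℝ} (hε : 0 < ε) :
    (minSNN d hε).weightsBddAbove (max 1 (1 / ε)) := by
  have hC : (1 : ℝ) ≤ max 1 (1 / ε) := le_max_left _ _
  have h0 : |(0 : ℝ)| ≤ max 1 (1 / ε) := abs_zero.trans_le (zero_le_one.trans hC)
  have hWin (i j : Fin d) : |(1 : Matrix (Fin d) (Fin d) ℝ) i j| ≤ 1 := by
    rw [Matrix.one_apply]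
    split_ifs <;> simp
  exact ⟨fun _ _ => (abs_of_pos (one_div_pos.2 hε)).trans_le (le_max_right _ _),
    fun _ _ => h0, fun i j => (hWin i j).trans hC, fun _ => h0,
    fun _ _ => abs_one.trans_le hC, fun _ => h0⟩

theorem minSNN_synBddBelow {ε : ℝ} (hε : 0 < ε) : (minSNN d hε).synBddBelow (1 / ε) :=
  fun _ _ => le_rfl

end MinSNN

/-- Lemma: approximation of the minimum. For `d0 ≥ 2` and `ε > 0`
there is an affine SNN whose realization is within `ε` of
`(x_1, …, x_{d0}) ↦ min{x_1, …, x_{d0}}` everywhere, of size exactly `2·d0 + 1`, whose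
network graph has depth `1`, all of whose weights are bounded in absolute value by
`max{1, 1/ε}`, and all of whose synaptic weights are at least `1/ε`. -/
theorem statement7 (d0 : ℕ) (hd0 : 2 ≤ d0) (ε : ℝ) (hε : 0 < ε) :
    ∃ Ψ : AffSNN d0 1,
      (∀ x : Fin d0 → ℝ, |Ψ.real x 0 - sInf (Set.range x)| ≤ ε) ∧
      Ψ.size = 2 * d0 + 1 ∧
      Ψ.G.DepthEq 1 ∧
      Ψ.weightsBddAbove (max 1 (1 / ε)) ∧
      Ψ.synBddBelow (1 / ε) := by
  have : NeZero d0 := ⟨by omega⟩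
  refine ⟨minSNN d0 hε, fun x => ?_, minSNN_size hε, starGraph_depthEq_one,
    minSNN_weightsBddAbove hε, minSNN_synBddBelow hε⟩
  obtain ⟨i₀, -, hi₀⟩ := Finset.univ.exists_min_image x Finset.univ_nonempty
  obtain ⟨t, ht, hlt, hle⟩ :=
    exists_isLeast_sum_relu_eq_one x (fun i => hi₀ i (Finset.mem_univ i)) hε
  have hinf : sInf (Set.range x) = x i₀ :=
    IsLeast.csInf_eq ⟨⟨i₀, rfl⟩, Set.forall_mem_range.2 fun i => hi₀ i (Finset.mem_univ i)⟩
  rw [minSNN_real_eq hε x ht, hinf, abs_le]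
  constructor <;> linarith
end
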